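/- (Existence part of the Lemma on the symmetrized connection coefficient.) Let θ0, θt, θ1, θ∞, σ0t, σ1t ∈ ℂ be such that none of the numbers θt±θ0±σ0t, θ1±θ∞±σ0t, θt±θ1±σ1t, θ0±θ∞±σ1t (all sign choices) is an integer. Define κ(σ0t,σ1t) = ∏_{ε,ε'=±} [Ĝ(θt+εθ0+ε'σ0t)·Ĝ(θ1+εθ∞+ε'σ0t)] / [Ĝ(θt+εθ1+ε'σ1t)·Ĝ(θ0+εθ∞+ε'σ1t)]. Then κ satisfies the two recurrence relations: κ(σ0t+1,σ1t)·∏_{ε=±} sin π(θt+σ0t+εθ0)·sin π(θ1+σ0t+εθ∞) = κ(σ0t,σ1t)·∏_{ε=±} sin π(θt−σ0t+εθ0)·sin π(θ1−σ0t+εθ∞), and κ(σ0t,σ1t+1)·∏_{ε=±} sin π(θt−σ1t+εθ1)·sin π(θ0−σ1t+εθ∞) = κ(σ0t,σ1t)·∏_{ε=±} sin π(θt+σ1t+εθ1)·sin π(θ0+σ1t+εθ∞). -/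

import Mathlib

/-!
Writing `G(1 + z) = P(z) ∏ₙ fₙ(z)`, each factor is `fₙ = exp ℓₙ` with `ℓₙ = O(n⁻²)`, so the
product converges, to a nonzero limit away from the poles. The partial products of
`fₙ(z + 1) / fₙ(z)` telescope to Euler's sequence `GammaSeq (z + 1) N` times a correction which,
by Stirling's formula and `H_N - log N → γ`, tends to `P(z) / P(z + 1)`; hence
`G(w + 1) = Γ(w) G(w)`. Together with the reflection formula this gives
`Ĝ(σ + 1) sin πσ = -π Ĝ(σ)`, and multiplying these relations over the four sign patterns shifts
each group of eight `Ĝ`-factors of `κ` by the stated ratio of sines.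
-/

open Complex Real

/-- The Barnes G-function, defined by the everywhere-convergent Weierstrass product
`G(1+z) = (2π)^{z/2}·exp(−(z+z²(1+γ))/2)·∏_{n≥1} (1+z/n)ⁿ·exp(z²/(2n) − z)`. -/
noncomputable def barnesG (w : ℂ) : ℂ :=
  (2 * (π : ℂ)) ^ ((w - 1) / 2) *
    Complex.exp (-((w - 1) + (w - 1) ^ 2 * (1 + (Real.eulerMascheroniConstant : ℂ))) / 2) *
    ∏' n : ℕ, ((1 + (w - 1) / ((n : ℂ) + 1)) ^ (n + 1) *
      Complex.exp ((w - 1) ^ 2 / (2 * ((n : ℂ) + 1)) - (w - 1)))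

/-- `Ĝ(σ) = G(1+σ)/G(1−σ)`. -/
noncomputable def GHat (σ : ℂ) : ℂ := barnesG (1 + σ) / barnesG (1 - σ)

open Filter Topology Finset Asymptotics

noncomputable def barnesPrefactor (z : ℂ) : ℂ :=
  (2 * (π : ℂ)) ^ (z / 2) * cexp (-(z + z ^ 2 * (1 + (eulerMascheroniConstant : ℂ))) / 2)

noncomputable def barnesFactor (n : ℕ) (z : ℂ) : ℂ :=
  (1 + z / (n + 1)) ^ (n + 1) * cexp (z ^ 2 / (2 * (n + 1)) - z)

noncomputable def barnesLogFactor (n : ℕ) (z : ℂ) : ℂ :=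
  (n + 1) * Complex.log (1 + z / (n + 1)) + z ^ 2 / (2 * (n + 1)) - z

lemma barnesG_one_add (z : ℂ) :
    barnesG (1 + z) = barnesPrefactor z * ∏' n, barnesFactor n z := by
  simp only [barnesG, barnesPrefactor, barnesFactor, add_sub_cancel_left]

lemma barnesLogFactor_eq (n : ℕ) (z : ℂ) : barnesLogFactor n z =
    (n + 1) * (Complex.log (1 + z / (n + 1)) - logTaylor 3 (z / (n + 1))) := by
  have : (n + 1 : ℂ) ≠ 0 := n.cast_add_one_ne_zero
  simp only [barnesLogFactor, logTaylor, sum_range_succ, sum_range_zero, Nat.cast_ofNat,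
    Nat.cast_one, Nat.cast_zero]
  field_simp
  ring

lemma summable_barnesLogFactor (z : ℂ) : Summable (barnesLogFactor · z) := by
  have hw : Tendsto (fun n : ℕ ↦ z / (n + 1)) atTop (𝓝 0) := by
    simpa [Function.comp_def] using
      (tendsto_const_div_atTop_nhds_zero_nat z).comp (tendsto_add_atTop_nat 1)
  have hO : (barnesLogFactor · z) =O[atTop] fun n : ℕ ↦ ((n : ℂ) + 1) * (z / (n + 1)) ^ 3 := by
    simp_rw [barnesLogFactor_eq]
    exact (isBigO_refl _ _).mul ((log_sub_logTaylor_isBigO 2).comp_tendsto hw)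
  refine summable_of_isBigO_nat (g := fun n : ℕ ↦ ‖z‖ ^ 3 * (1 / ((n : ℝ) + 1) ^ 2)) ?_ ?_
  · refine .mul_left _ ?_
    exact_mod_cast (summable_nat_add_iff 1).mpr (Real.summable_one_div_nat_pow.mpr one_lt_two)
  · refine hO.trans (IsBigO.of_norm_eventuallyLE ?_)
    filter_upwards with n
    have : ‖(n : ℂ) + 1‖ = n + 1 := by exact_mod_cast Complex.norm_natCast (n + 1)
    rw [norm_mul, norm_pow, norm_div, this]
    field_simp
    exact le_rfl

lemma one_add_div_natCast_add_one_ne_zero {z : ℂ} (hz : ∀ m : ℕ, 1 + z ≠ -m) (n : ℕ) :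
    1 + z / (n + 1) ≠ 0 := by
  have : (n + 1 : ℂ) ≠ 0 := n.cast_add_one_ne_zero
  rw [show 1 + z / (n + 1) = (n + 1 + z) / (n + 1) by field_simp]
  exact div_ne_zero (fun h ↦ hz n (by linear_combination h)) this

lemma barnesFactor_eq_exp {n : ℕ} {z : ℂ} (h : 1 + z / (n + 1) ≠ 0) :
    barnesFactor n z = cexp (barnesLogFactor n z) := by
  rw [barnesFactor, barnesLogFactor, add_sub_assoc, Complex.exp_add, ← Nat.cast_add_one,
    Complex.exp_nat_mul, Complex.exp_log (by exact_mod_cast h)]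

lemma hasProd_barnesFactor {z : ℂ} (hz : ∀ m : ℕ, 1 + z ≠ -m) :
    HasProd (barnesFactor · z) (cexp (∑' n, barnesLogFactor n z)) := by
  convert (summable_barnesLogFactor z).hasSum.cexp using 1
  funext n
  exact barnesFactor_eq_exp (one_add_div_natCast_add_one_ne_zero hz n)

lemma barnesG_one_add_eq_mul_exp {z : ℂ} (hz : ∀ m : ℕ, 1 + z ≠ -m) :
    barnesG (1 + z) = barnesPrefactor z * cexp (∑' n, barnesLogFactor n z) := by
  rw [barnesG_one_add, (hasProd_barnesFactor hz).tprod_eq]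

lemma barnesG_ne_zero {w : ℂ} (hw : ∀ m : ℕ, w ≠ -m) : barnesG w ≠ 0 := by
  rw [← add_sub_cancel 1 w, barnesG_one_add_eq_mul_exp (by simpa only [add_sub_cancel] using hw),
    barnesPrefactor]
  have : (2 * π : ℂ) ≠ 0 := by exact_mod_cast Real.two_pi_pos.ne'
  exact mul_ne_zero (mul_ne_zero (cpow_ne_zero_iff.mpr (.inl this)) (Complex.exp_ne_zero _))
    (Complex.exp_ne_zero _)

lemma barnesFactor_add_one_mul (n : ℕ) (z : ℂ) :
    barnesFactor n (z + 1) * (z + 1 + n) * (n + 1 + z) ^ n =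
      barnesFactor n z * (n + 2 + z) ^ (n + 1) * cexp ((z + 1 / 2) / (n + 1) - 1) := by
  have hn : (n + 1 : ℂ) ≠ 0 := n.cast_add_one_ne_zero
  have hexp : cexp ((z + 1) ^ 2 / (2 * (n + 1)) - (z + 1)) =
      cexp (z ^ 2 / (2 * (n + 1)) - z) * cexp ((z + 1 / 2) / (n + 1) - 1) := by
    rw [← Complex.exp_add]
    congr 1
    field_simp
    ring
  rw [barnesFactor, barnesFactor, hexp,
    show 1 + (z + 1) / (n + 1) = (n + 2 + z) / (n + 1) by field_simp; ring,
    show 1 + z / (n + 1) = (n + 1 + z) / (n + 1) by field_simp, div_pow, div_pow]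
  field_simp
  ring

lemma prod_barnesFactor_add_one_mul (z : ℂ) (N : ℕ) :
    (∏ n ∈ range N, barnesFactor n (z + 1)) * ∏ n ∈ range N, (z + 1 + n) =
      (∏ n ∈ range N, barnesFactor n z) * (N + 1 + z) ^ N *
        cexp ((z + 1 / 2) * harmonic N - N) := by
  induction N with
  | zero => simp
  | succ N ih =>
    have hexp : cexp ((z + 1 / 2) * harmonic (N + 1) - (N + 1 : ℕ)) =
        cexp ((z + 1 / 2) * harmonic N - N) * cexp ((z + 1 / 2) / (N + 1) - 1) := by
      rw [← Complex.exp_add, harmonic_succ]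
      push_cast
      ring_nf
    rw [prod_range_succ, prod_range_succ, prod_range_succ, hexp]
    push_cast
    linear_combination barnesFactor N (z + 1) * (z + 1 + N) * ih +
      (∏ n ∈ range N, barnesFactor n z) * cexp ((z + 1 / 2) * harmonic N - N) *
        barnesFactor_add_one_mul N z

noncomputable def barnesRatioCorrection (z : ℂ) (N : ℕ) : ℂ :=
  (N + 1 + z) ^ (N + 1) * cexp ((z + 1 / 2) * harmonic N - N) / ((N : ℂ) ^ (z + 1) * N.factorial)

lemma prod_barnesFactor_add_one_div {z : ℂ} (hz : ∀ m : ℕ, 1 + z ≠ -m) {N : ℕ} (hN : N ≠ 0) :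
    (∏ n ∈ range N, barnesFactor n (z + 1)) / ∏ n ∈ range N, barnesFactor n z =
      Complex.GammaSeq (z + 1) N * barnesRatioCorrection z N := by
  have hQ : ∀ n : ℕ, z + 1 + n ≠ 0 := fun n h ↦ hz n (by linear_combination h)
  have hP : ∏ n ∈ range N, barnesFactor n z ≠ 0 := prod_ne_zero_iff.mpr fun n _ ↦
    (barnesFactor_eq_exp (one_add_div_natCast_add_one_ne_zero hz n)).symm ▸ Complex.exp_ne_zero _
  have hQN : ∏ n ∈ range N, (z + 1 + n) ≠ 0 := prod_ne_zero_iff.mpr fun n _ ↦ hQ n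
  have hpow : (N : ℂ) ^ (z + 1) ≠ 0 := cpow_ne_zero_iff.mpr (.inl (Nat.cast_ne_zero.mpr hN))
  have hfac : (N.factorial : ℂ) ≠ 0 := Nat.cast_ne_zero.mpr N.factorial_ne_zero
  have hid := prod_barnesFactor_add_one_mul z N
  have hzN := hQ N
  rw [div_eq_iff hP, Complex.GammaSeq, prod_range_succ, barnesRatioCorrection]
  set E := cexp ((z + 1 / 2) * harmonic N - N)
  field_simp
  linear_combination (z + 1 + N) * hid

lemma inv_sqrt_two_mul_stirlingSeq {N : ℕ} (hN : N ≠ 0) :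
    (√2 * Stirling.stirlingSeq N)⁻¹ =
      Real.exp (Real.log N / 2) * N ^ N * Real.exp (-N) / N.factorial := by
  have hN0 : (0 : ℝ) < N := by positivity
  have hsqrt : √(N : ℝ) = Real.exp (Real.log N / 2) := by
    rw [Real.sqrt_eq_rpow, Real.rpow_def_of_pos hN0, mul_one_div]
  rw [Stirling.stirlingSeq, Real.sqrt_mul zero_le_two, hsqrt, div_pow, Real.exp_one_pow,
    Real.exp_neg]
  field_simp

lemma barnesRatioCorrection_eq {N : ℕ} (hN : N ≠ 0) (z : ℂ) :
    barnesRatioCorrection z N = (1 + (1 + z) / N) ^ N * (1 + (1 + z) / N) *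
      cexp ((z + 1 / 2) * ((harmonic N - Real.log N : ℝ) : ℂ)) *
        ((√2 * Stirling.stirlingSeq N)⁻¹ : ℝ) := by
  have hN0 : (N : ℂ) ≠ 0 := Nat.cast_ne_zero.mpr hN
  have hfac : (N.factorial : ℂ) ≠ 0 := Nat.cast_ne_zero.mpr N.factorial_ne_zero
  rw [inv_sqrt_two_mul_stirlingSeq hN, barnesRatioCorrection, cpow_def_of_ne_zero hN0,
    show 1 + (1 + z) / N = (N + 1 + z) / N by field_simp; ring]
  push_cast
  set L : ℂ := Complex.log N
  have hexpL : cexp L = N := Complex.exp_log hN0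
  have hexp : cexp ((z + 1 / 2) * harmonic N - N) * cexp L =
      cexp ((z + 1 / 2) * (harmonic N - L)) * cexp (L / 2) * cexp (-N) * cexp (L * (z + 1)) := by
    simp only [← Complex.exp_add]
    ring_nf
  rw [hexpL] at hexp
  rw [div_pow]
  set E := cexp ((z + 1 / 2) * harmonic N - N)
  set A := cexp ((z + 1 / 2) * (harmonic N - L))
  set D := cexp (L * (z + 1))
  have hD : D ≠ 0 := Complex.exp_ne_zero _
  field_simp
  linear_combination (N + 1 + z) ^ (N + 1) * hexp

lemma tendsto_barnesRatioCorrection (z : ℂ) :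
    Tendsto (barnesRatioCorrection z) atTop
      (𝓝 (cexp (1 + z + (z + 1 / 2) * eulerMascheroniConstant) / (√(2 * π) : ℝ))) := by
  have hpow : Tendsto (fun N : ℕ ↦ 1 + (1 + z) / N) atTop (𝓝 1) := by
    simpa using (tendsto_const_div_atTop_nhds_zero_nat (1 + z)).const_add 1
  have hγ : Tendsto (fun N : ℕ ↦ cexp ((z + 1 / 2) * ((harmonic N - Real.log N : ℝ) : ℂ)))
      atTop (𝓝 (cexp ((z + 1 / 2) * eulerMascheroniConstant))) :=
    ((continuous_ofReal.tendsto _).comp tendsto_harmonic_sub_log).const_mul _ |>.cexp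
  have hstirling : Tendsto (fun N : ℕ ↦ (((√2 * Stirling.stirlingSeq N)⁻¹ : ℝ) : ℂ)) atTop
      (𝓝 ((√(2 * π))⁻¹ : ℝ)) := by
    rw [Real.sqrt_mul zero_le_two]
    exact (continuous_ofReal.tendsto _).comp <|
      (Stirling.tendsto_stirlingSeq_sqrt_pi.const_mul _).inv₀ (by positivity)
  convert ((((tendsto_one_add_div_pow_exp (1 + z)).mul hpow).mul hγ).mul hstirling).congr'
    (eventually_ne_atTop 0 |>.mono fun N hN ↦ (barnesRatioCorrection_eq hN z).symm) using 2
  rw [Complex.exp_add, ofReal_inv]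
  ring

lemma barnesPrefactor_add_one_mul (z : ℂ) :
    barnesPrefactor (z + 1) *
      (cexp (1 + z + (z + 1 / 2) * eulerMascheroniConstant) / (√(2 * π) : ℝ)) =
        barnesPrefactor z := by
  have h2π : (2 * π : ℂ) ≠ 0 := by exact_mod_cast Real.two_pi_pos.ne'
  have hsqrt : (2 * π : ℂ) ^ (1 / 2 : ℂ) = (√(2 * π) : ℝ) := by
    rw [Real.sqrt_eq_rpow, ofReal_cpow Real.two_pi_pos.le]
    norm_num
  have hcpow : (2 * π : ℂ) ^ ((z + 1) / 2) = (2 * π : ℂ) ^ (z / 2) * (√(2 * π) : ℝ) := by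
    rw [← hsqrt, ← cpow_add _ _ h2π, add_div]
  have hsqrt0 : ((√(2 * π) : ℝ) : ℂ) ≠ 0 := by
    exact_mod_cast (Real.sqrt_pos.mpr Real.two_pi_pos).ne'
  rw [barnesPrefactor, barnesPrefactor, hcpow, mul_div_assoc', mul_assoc, mul_assoc,
    ← Complex.exp_add]
  field_simp
  congr 1
  ring

theorem barnesG_add_one {w : ℂ} (hw : ∀ m : ℕ, w ≠ -m) :
    barnesG (w + 1) = Complex.Gamma w * barnesG w := by
  obtain ⟨z, rfl⟩ : ∃ z, w = 1 + z := ⟨w - 1, by ring⟩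
  have hz1 : ∀ m : ℕ, 1 + (z + 1) ≠ -m := fun m h ↦ hw (m + 1) (by push_cast; linear_combination h)
  have hlim : cexp (∑' n, barnesLogFactor n (z + 1)) / cexp (∑' n, barnesLogFactor n z) =
      Complex.Gamma (z + 1) *
        (cexp (1 + z + (z + 1 / 2) * eulerMascheroniConstant) / (√(2 * π) : ℝ)) := by
    refine tendsto_nhds_unique ?_
      ((Complex.GammaSeq_tendsto_Gamma (z + 1)).mul (tendsto_barnesRatioCorrection z))
    refine ((hasProd_barnesFactor hz1).tendsto_prod_nat.div
      (hasProd_barnesFactor hw).tendsto_prod_nat (Complex.exp_ne_zero _)).congr' ?_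
    filter_upwards [eventually_ne_atTop 0] with N hN
    exact prod_barnesFactor_add_one_div hw hN
  rw [div_eq_iff (Complex.exp_ne_zero _)] at hlim
  rw [add_assoc, barnesG_one_add_eq_mul_exp hz1, barnesG_one_add_eq_mul_exp hw, hlim,
    ← barnesPrefactor_add_one_mul z, add_comm z 1]
  ring

lemma GHat_ne_zero {σ : ℂ} (hσ : ∀ n : ℤ, σ ≠ n) : GHat σ ≠ 0 :=
  div_ne_zero (barnesG_ne_zero fun m h ↦ hσ (-(m + 1)) (by push_cast; linear_combination h))
    (barnesG_ne_zero fun m h ↦ hσ (m + 1) (by push_cast; linear_combination -h))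

lemma GHat_add_one {σ : ℂ} (hσ : ∀ n : ℤ, σ ≠ n) :
    GHat (σ + 1) = Complex.Gamma (1 + σ) * Complex.Gamma (-σ) * GHat σ := by
  have hG₁ := barnesG_add_one (w := 1 + σ) fun m h ↦
    hσ (-(m + 1)) (by push_cast; linear_combination h)
  have hG₂ := barnesG_add_one (w := -σ) fun m h ↦ hσ m (by push_cast; linear_combination -h)
  have hΓ : Complex.Gamma (-σ) ≠ 0 :=
    Complex.Gamma_ne_zero fun m h ↦ hσ m (by push_cast; linear_combination -h)
  rw [GHat, GHat, show 1 + (σ + 1) = 1 + σ + 1 by ring, hG₁, show 1 - (σ + 1) = -σ by ring,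
    show 1 - σ = -σ + 1 by ring, hG₂, mul_assoc, mul_div_assoc', mul_div_mul_left _ _ hΓ,
    mul_div_assoc]

lemma Gamma_one_add_mul_Gamma_neg_mul_sin {σ : ℂ} (hσ : ∀ n : ℤ, σ ≠ n) :
    Complex.Gamma (1 + σ) * Complex.Gamma (-σ) * Complex.sin (π * σ) = -π := by
  have hsin : Complex.sin (π * σ) ≠ 0 := Complex.sin_ne_zero_iff.mpr fun k h ↦
    hσ k (mul_left_cancel₀ (ofReal_ne_zero.mpr Real.pi_ne_zero) (by rw [h]; ring))
  have h := Complex.Gamma_mul_Gamma_one_sub (1 + σ)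
  rw [show 1 - (1 + σ) = -σ by ring, show (π : ℂ) * (1 + σ) = π * σ + π by ring,
    Complex.sin_add_pi] at h
  rw [h]
  field_simp

lemma GHat_add_one_mul_sin {σ : ℂ} (hσ : ∀ n : ℤ, σ ≠ n) :
    GHat (σ + 1) * Complex.sin (π * σ) = -π * GHat σ := by
  rw [GHat_add_one hσ, ← Gamma_one_add_mul_Gamma_neg_mul_sin hσ]
  ring

lemma GHat_pair_add_one {a x : ℂ} (h₁ : ∀ n : ℤ, a + x ≠ n) (h₂ : ∀ n : ℤ, a - x ≠ n) :
    GHat (a + (x + 1)) * GHat (a - (x + 1)) * Complex.sin (π * (a + x)) =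
      -(GHat (a + x) * GHat (a - x) * Complex.sin (π * (a - x))) := by
  have hs := GHat_add_one_mul_sin h₁
  have hp := GHat_add_one_mul_sin (σ := a - x - 1) fun n h ↦
    h₂ (n + 1) (by push_cast; linear_combination h)
  rw [sub_add_cancel, mul_sub_one, Complex.sin_sub_pi] at hp
  rw [← add_assoc, ← sub_sub]
  apply mul_right_cancel₀ (ofReal_ne_zero.mpr Real.pi_ne_zero)
  linear_combination π * GHat (a - x - 1) * hs - π * GHat (a + x) * hp

def SignedSumsNotInt (p q x : ℂ) : Prop :=
  ∀ e e' : ℤ, (e = 1 ∨ e = -1) → (e' = 1 ∨ e' = -1) → ∀ n : ℤ, p + e * q + e' * x ≠ n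

namespace SignedSumsNotInt

variable {p q x : ℂ}

lemma add_one (h : SignedSumsNotInt p q x) : SignedSumsNotInt p q (x + 1) :=
  fun e e' he he' n hn ↦ h e e' he he' (n - e') (by push_cast; linear_combination hn)

lemma ne_intCast (h : SignedSumsNotInt p q x) :
    (∀ n : ℤ, p + q + x ≠ n) ∧ (∀ n : ℤ, p + q - x ≠ n) ∧
      (∀ n : ℤ, p - q + x ≠ n) ∧ (∀ n : ℤ, p - q - x ≠ n) :=
  ⟨fun n hn ↦ h 1 1 (.inl rfl) (.inl rfl) n (by push_cast; linear_combination hn),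
    fun n hn ↦ h 1 (-1) (.inl rfl) (.inr rfl) n (by push_cast; linear_combination hn),
    fun n hn ↦ h (-1) 1 (.inr rfl) (.inl rfl) n (by push_cast; linear_combination hn),
    fun n hn ↦ h (-1) (-1) (.inr rfl) (.inr rfl) n (by push_cast; linear_combination hn)⟩

end SignedSumsNotInt

noncomputable def GHatQuad (p q x : ℂ) : ℂ :=
  GHat (p + q + x) * GHat (p + q - x) * GHat (p - q + x) * GHat (p - q - x)

lemma GHatQuad_ne_zero {p q x : ℂ} (h : SignedSumsNotInt p q x) : GHatQuad p q x ≠ 0 := by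
  obtain ⟨h₁, h₂, h₃, h₄⟩ := h.ne_intCast
  exact mul_ne_zero (mul_ne_zero (mul_ne_zero (GHat_ne_zero h₁) (GHat_ne_zero h₂))
    (GHat_ne_zero h₃)) (GHat_ne_zero h₄)

lemma GHatQuad_add_one_mul {p q x : ℂ} (h : SignedSumsNotInt p q x) :
    GHatQuad p q (x + 1) * (Complex.sin (π * (p + x + q)) * Complex.sin (π * (p + x - q))) =
      GHatQuad p q x * (Complex.sin (π * (p - x + q)) * Complex.sin (π * (p - x - q))) := by
  obtain ⟨h₁, h₂, h₃, h₄⟩ := h.ne_intCast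
  have hplus := GHat_pair_add_one h₁ h₂
  have hminus := GHat_pair_add_one h₃ h₄
  rw [add_right_comm p x q, add_sub_right_comm p x q, sub_add_eq_add_sub p x q,
    sub_right_comm p x q, GHatQuad, GHatQuad]
  linear_combination GHat (p - q + (x + 1)) * GHat (p - q - (x + 1)) *
      Complex.sin (π * (p - q + x)) * hplus -
    GHat (p + q + x) * GHat (p + q - x) * Complex.sin (π * (p + q - x)) * hminus

lemma GHatQuad_mul_GHatQuad_add_one_mul {a b c d x : ℂ} (hab : SignedSumsNotInt a b x)
    (hcd : SignedSumsNotInt c d x) :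
    GHatQuad a b (x + 1) * GHatQuad c d (x + 1) *
        (Complex.sin (π * (a + x + b)) * Complex.sin (π * (c + x + d)) *
          Complex.sin (π * (a + x - b)) * Complex.sin (π * (c + x - d))) =
      GHatQuad a b x * GHatQuad c d x *
        (Complex.sin (π * (a - x + b)) * Complex.sin (π * (c - x + d)) *
          Complex.sin (π * (a - x - b)) * Complex.sin (π * (c - x - d))) := by
  linear_combination congr($(GHatQuad_add_one_mul hab) * $(GHatQuad_add_one_mul hcd))

theorem kappa_satisfies_recurrences
    (θ0 θt θ1 θinf σ0t σ1t : ℂ)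
    (hint : ∀ e e' : ℤ, (e = 1 ∨ e = -1) → (e' = 1 ∨ e' = -1) → ∀ n : ℤ,
      θt + (e : ℂ) * θ0 + (e' : ℂ) * σ0t ≠ (n : ℂ) ∧
      θ1 + (e : ℂ) * θinf + (e' : ℂ) * σ0t ≠ (n : ℂ) ∧
      θt + (e : ℂ) * θ1 + (e' : ℂ) * σ1t ≠ (n : ℂ) ∧
      θ0 + (e : ℂ) * θinf + (e' : ℂ) * σ1t ≠ (n : ℂ))
    (κ : ℂ → ℂ → ℂ)
    (hκ : ∀ x y : ℂ, κ x y =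
      (GHat (θt + θ0 + x) * GHat (θ1 + θinf + x) *
       GHat (θt + θ0 - x) * GHat (θ1 + θinf - x) *
       GHat (θt - θ0 + x) * GHat (θ1 - θinf + x) *
       GHat (θt - θ0 - x) * GHat (θ1 - θinf - x)) /
      (GHat (θt + θ1 + y) * GHat (θ0 + θinf + y) *
       GHat (θt + θ1 - y) * GHat (θ0 + θinf - y) *
       GHat (θt - θ1 + y) * GHat (θ0 - θinf + y) *
       GHat (θt - θ1 - y) * GHat (θ0 - θinf - y))) :
    κ (σ0t + 1) σ1t *
      (Complex.sin ((π : ℂ) * (θt + σ0t + θ0)) * Complex.sin ((π : ℂ) * (θ1 + σ0t + θinf)) *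
       Complex.sin ((π : ℂ) * (θt + σ0t - θ0)) * Complex.sin ((π : ℂ) * (θ1 + σ0t - θinf))) =
    κ σ0t σ1t *
      (Complex.sin ((π : ℂ) * (θt - σ0t + θ0)) * Complex.sin ((π : ℂ) * (θ1 - σ0t + θinf)) *
       Complex.sin ((π : ℂ) * (θt - σ0t - θ0)) * Complex.sin ((π : ℂ) * (θ1 - σ0t - θinf))) ∧
    κ σ0t (σ1t + 1) *
      (Complex.sin ((π : ℂ) * (θt - σ1t + θ1)) * Complex.sin ((π : ℂ) * (θ0 - σ1t + θinf)) *
       Complex.sin ((π : ℂ) * (θt - σ1t - θ1)) * Complex.sin ((π : ℂ) * (θ0 - σ1t - θinf))) =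
    κ σ0t σ1t *
      (Complex.sin ((π : ℂ) * (θt + σ1t + θ1)) * Complex.sin ((π : ℂ) * (θ0 + σ1t + θinf)) *
       Complex.sin ((π : ℂ) * (θt + σ1t - θ1)) * Complex.sin ((π : ℂ) * (θ0 + σ1t - θinf))) := by
  have hκ' : ∀ x y, κ x y = GHatQuad θt θ0 x * GHatQuad θ1 θinf x /
      (GHatQuad θt θ1 y * GHatQuad θ0 θinf y) := fun x y ↦ by
    rw [hκ, GHatQuad, GHatQuad, GHatQuad, GHatQuad]
    ring
  have ht0 : SignedSumsNotInt θt θ0 σ0t := fun e e' he he' n ↦ (hint e e' he he' n).1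
  have h1inf : SignedSumsNotInt θ1 θinf σ0t := fun e e' he he' n ↦ (hint e e' he he' n).2.1
  have ht1 : SignedSumsNotInt θt θ1 σ1t := fun e e' he he' n ↦ (hint e e' he he' n).2.2.1
  have h0inf : SignedSumsNotInt θ0 θinf σ1t := fun e e' he he' n ↦ (hint e e' he he' n).2.2.2
  simp only [hκ', div_mul_eq_mul_div]
  constructor
  · rw [GHatQuad_mul_GHatQuad_add_one_mul ht0 h1inf]
  · rw [div_eq_div_iff (mul_ne_zero (GHatQuad_ne_zero ht1.add_one) (GHatQuad_ne_zero h0inf.add_one))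
      (mul_ne_zero (GHatQuad_ne_zero ht1) (GHatQuad_ne_zero h0inf))]
    linear_combination -(GHatQuad θt θ0 σ0t * GHatQuad θ1 θinf σ0t) *
      GHatQuad_mul_GHatQuad_add_one_mul ht1 h0inf
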